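/- Let g(x) = x^5 and h(x) = x^4 restricted to (−1/√2, 1/√2), and f_K(x) = 1/(π(1−x²)√(1−2x²)). Then ∫_{−1/√2}^{1/√2} x² f_K(x) dx = 1 − 1/√2. -/

import Mathlib

/-!
For `0 < a < 1` the Konno density is `f_K(x; a) = √(1 - a²) / (π (1 - x²) √(a² - x²))`, and
`x² / (1 - x²) = 1 / (1 - x²) - 1` splits `x² f_K(x; a)` into two elementary integrands with
primitives `arcsin (√(1 - a²) x / (a √(1 - x²))) / π` and `√(1 - a²) arcsin (x / a) / π`.
Both extend continuously to `x = ±a`, where the arcsines equal `±π/2`, and the integrand is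
nonnegative, so the fundamental theorem of calculus applies to the improper integral and gives
`1 - √(1 - a²)`. The Hadamard walk is the case `a = 1/√2`.
-/

open Real Set

lemma intervalIntegral.integral_eq_sub_of_hasDerivAt_of_nonneg {f f' : ℝ → ℝ} {a b : ℝ}
    (hab : a ≤ b) (hcont : ContinuousOn f (Icc a b))
    (hderiv : ∀ x ∈ Ioo a b, HasDerivAt f (f' x) x) (hpos : ∀ x ∈ Ioo a b, 0 ≤ f' x) :
    ∫ y in a..b, f' y = f b - f a :=
  integral_eq_sub_of_hasDerivAt_of_le hab hcont hderiv <|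
    (intervalIntegrable_iff_integrableOn_Ioc_of_le hab).2 <|
      integrableOn_deriv_of_nonneg hcont hderiv hpos

lemma HasDerivAt.arcsin {f : ℝ → ℝ} {f' x : ℝ} (hf : HasDerivAt f f' x) (hx : f x ^ 2 < 1) :
    HasDerivAt (fun y => arcsin (f y)) (f' / √(1 - f x ^ 2)) x := by
  have h := (hasDerivAt_arcsin (by nlinarith) (by nlinarith)).comp x hf
  rwa [one_div_mul_eq_div] at h

lemma hasDerivAt_div_sqrt_one_sub_sq {x : ℝ} (hx : x ^ 2 < 1) :
    HasDerivAt (fun y => y / √(1 - y ^ 2)) (1 / ((1 - x ^ 2) * √(1 - x ^ 2))) x := by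
  have hpos : 0 < 1 - x ^ 2 := by linarith
  have hsqrt : HasDerivAt (fun y => √(1 - y ^ 2)) (-x / √(1 - x ^ 2)) x := by
    convert ((hasDerivAt_pow 2 x).const_sub 1).sqrt hpos.ne' using 1
    ring
  refine ((hasDerivAt_id' x).div hsqrt (sqrt_pos.2 hpos).ne').congr_deriv ?_
  have hs := sq_sqrt hpos.le
  have := (sqrt_pos.2 hpos).ne'
  field_simp
  rw [hs]
  ring

noncomputable def konnoDensity (a x : ℝ) : ℝ :=
  √(1 - a ^ 2) / (π * (1 - x ^ 2) * √(a ^ 2 - x ^ 2))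

noncomputable def konnoSecondMomentPrimitive (a x : ℝ) : ℝ :=
  (arcsin (√(1 - a ^ 2) / a * (x / √(1 - x ^ 2))) - √(1 - a ^ 2) * arcsin (x / a)) / π

lemma konnoSecondMomentPrimitive_neg (a x : ℝ) :
    konnoSecondMomentPrimitive a (-x) = -konnoSecondMomentPrimitive a x := by
  simp only [konnoSecondMomentPrimitive, neg_sq, neg_div, mul_neg, arcsin_neg]
  ring

section

variable {a x : ℝ}

lemma hasDerivAt_konnoSecondMomentPrimitive (ha : 0 < a) (ha1 : a < 1) (hx : x ∈ Ioo (-a) a) :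
    HasDerivAt (konnoSecondMomentPrimitive a) (x ^ 2 * konnoDensity a x) x := by
  have hxa : x ^ 2 < a ^ 2 := sq_lt_sq' hx.1 hx.2
  have h1a : 0 < 1 - a ^ 2 := by nlinarith
  have hax : 0 < a ^ 2 - x ^ 2 := by linarith
  have h1x : 0 < 1 - x ^ 2 := by linarith
  have hs1x := sq_sqrt h1x.le
  have hsq1 : 1 - (√(1 - a ^ 2) / a * (x / √(1 - x ^ 2))) ^ 2
      = (√(a ^ 2 - x ^ 2) / (a * √(1 - x ^ 2))) ^ 2 := by
    rw [div_pow, mul_pow, mul_pow, div_pow, div_pow, hs1x, sq_sqrt h1a.le, sq_sqrt hax.le]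
    field_simp
    ring
  have hsq2 : 1 - (x / a) ^ 2 = (√(a ^ 2 - x ^ 2) / a) ^ 2 := by
    rw [div_pow, div_pow, sq_sqrt hax.le]
    field_simp
  have hd1 := ((hasDerivAt_div_sqrt_one_sub_sq (x := x) (by linarith)).const_mul
    (√(1 - a ^ 2) / a)).arcsin (by rw [← sub_pos, hsq1]; positivity)
  have hd2 := ((hasDerivAt_id' x).div_const a).arcsin (by rw [← sub_pos, hsq2]; positivity)
  refine ((hd1.sub (hd2.const_mul (√(1 - a ^ 2)))).div_const π).congr_deriv ?_
  rw [hsq1, hsq2, sqrt_sq (by positivity), sqrt_sq (by positivity), konnoDensity]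
  have := (sqrt_pos.2 hax).ne'
  have := (sqrt_pos.2 h1x).ne'
  have := pi_pos.ne'
  field_simp
  ring

lemma konnoSecondMomentPrimitive_self (ha : 0 < a) (ha1 : a < 1) :
    konnoSecondMomentPrimitive a a = (1 - √(1 - a ^ 2)) / 2 := by
  have h1a : 0 < √(1 - a ^ 2) := sqrt_pos.2 (by nlinarith)
  have hone : √(1 - a ^ 2) / a * (a / √(1 - a ^ 2)) = 1 := by field_simp
  rw [konnoSecondMomentPrimitive, hone, div_self ha.ne', arcsin_one]
  field_simp

lemma continuousOn_konnoSecondMomentPrimitive (ha1 : a < 1) :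
    ContinuousOn (konnoSecondMomentPrimitive a) (Icc (-a) a) := by
  have hs : ∀ x ∈ Icc (-a) a, √(1 - x ^ 2) ≠ 0 := fun x hx =>
    (sqrt_pos.2 (by nlinarith [hx.1, hx.2])).ne'
  unfold konnoSecondMomentPrimitive
  fun_prop (disch := assumption)

lemma konnoDensity_nonneg (hx : x ^ 2 ≤ 1) : 0 ≤ konnoDensity a x := by
  unfold konnoDensity
  have := sub_nonneg.2 hx
  positivity

theorem integral_sq_mul_konnoDensity (ha : 0 < a) (ha1 : a < 1) :
    ∫ x in -a..a, x ^ 2 * konnoDensity a x = 1 - √(1 - a ^ 2) := by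
  rw [intervalIntegral.integral_eq_sub_of_hasDerivAt_of_nonneg (by linarith)
    (continuousOn_konnoSecondMomentPrimitive ha1)
    (fun x hx => hasDerivAt_konnoSecondMomentPrimitive ha ha1 hx)
    (fun x hx => mul_nonneg (sq_nonneg x) (konnoDensity_nonneg (by nlinarith [hx.1, hx.2]))),
    konnoSecondMomentPrimitive_neg, konnoSecondMomentPrimitive_self ha ha1]
  ring

end

theorem konno_second_moment_hadamard :
    ∫ x in (-(1 / Real.sqrt 2))..(1 / Real.sqrt 2),
      x ^ 2 * (1 / (π * (1 - x ^ 2) * Real.sqrt (1 - 2 * x ^ 2))) = 1 - 1 / Real.sqrt 2 := by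
  have ha2 : (1 / √2) ^ 2 = 1 / 2 := by rw [div_pow, one_pow, sq_sqrt zero_le_two]
  have hdensity (x : ℝ) :
      1 / (π * (1 - x ^ 2) * √(1 - 2 * x ^ 2)) = konnoDensity (1 / √2) x := by
    have : (1 / √2) ^ 2 - x ^ 2 = (1 - 2 * x ^ 2) / 2 := by rw [ha2]; ring
    rw [konnoDensity, this, ha2, sqrt_div' _ zero_le_two,
      show (1 : ℝ) - 1 / 2 = 1 / 2 by norm_num, sqrt_div' _ zero_le_two, sqrt_one]
    field_simp
  simp_rw [hdensity]
  rw [integral_sq_mul_konnoDensity (by positivity)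
      ((div_lt_one (by positivity)).2 one_lt_sqrt_two), ha2,
    show (1 : ℝ) - 1 / 2 = 1 / 2 by norm_num, sqrt_div' _ zero_le_two, sqrt_one]
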